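/- For every x ∈ WΩ_{k[X̲]/k}, there exists ε > 0 such that γ_ε(x) ≠ −∞ if and only if there exists ε′ > 0 such that ζ_{ε′}(x) ≠ −∞. (Consequently the functions ζ_ε define the same overconvergent de Rham–Witt complex as the functions γ_ε of Davis–Langer–Zink.) -/

import Mathlib

/-!
Framework for the de Rham-Witt complex of a polynomial algebra, following
Davis-Langer-Zink and Langer-Zink, needed to state results on overconvergent
pseudovaluations.
-/

attribute [local instance] Classical.propDecidable

open scoped BigOperators

/-- A weight function: a map `Fin n → ℚ` with nonnegative values lying in `ℕ[1/p]`. -/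
structure WeightFun (p n : ℕ) where
  val : Fin n → ℚ
  nonneg : ∀ i, 0 ≤ val i
  mem_padicFrac : ∀ i, ∃ (c m : ℕ), val i = (c : ℚ) / (p : ℚ) ^ m

namespace WeightFun

variable {p n : ℕ}

/-- The support of a weight function. -/
noncomputable def supp (a : WeightFun p n) : Finset (Fin n) :=
  Finset.univ.filter fun i => a.val i ≠ 0

/-- The key used for the total order `⪯` on the support of `a`:
`i ⪯ i'` iff `val_p (a i) < val_p (a i')`, or they are equal and `i ≤ i'`. -/
noncomputable def key (a : WeightFun p n) (i : Fin n) : ℤ ×ₗ Fin n :=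
  toLex (padicValRat p (a.val i), i)

/-- `val_p(a) = min { val_p (a i) | i ∈ Supp a }` (with junk value `0` if `a = 0`). -/
noncomputable def valp (a : WeightFun p n) : ℤ :=
  if h : a.supp.Nonempty then
    (a.supp.image fun i => padicValRat p (a.val i)).min' (h.image _)
  else 0

/-- `u(a) = max {0, -val_p(a)}`. -/
noncomputable def u (a : WeightFun p n) : ℕ := (-a.valp).toNat

/-- `|a| = Σ_i a_i`. -/
noncomputable def total (a : WeightFun p n) : ℚ := ∑ i, a.val i

/-- Restriction `a|_J` of a weight function to a set of indices. -/
noncomputable def restrict (a : WeightFun p n) (J : Finset (Fin n)) : WeightFun p n where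
  val i := if i ∈ J then a.val i else 0
  nonneg i := by by_cases h : i ∈ J <;> simp [h, a.nonneg i]
  mem_padicFrac i := by
    by_cases h : i ∈ J
    · simpa [h] using a.mem_padicFrac i
    · exact ⟨0, 0, by simp [h]⟩

/-- A weight function is `ℕ`-valued if each of its values is a natural number. -/
def NatValued (a : WeightFun p n) : Prop := ∀ i, ∃ c : ℕ, a.val i = (c : ℚ)

noncomputable instance [Fact p.Prime] : Add (WeightFun p n) where
  add a b :=
    { val := fun i => a.val i + b.val i
      nonneg := fun i => add_nonneg (a.nonneg i) (b.nonneg i)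
      mem_padicFrac := by
        intro i
        obtain ⟨c, m, hc⟩ := a.mem_padicFrac i
        obtain ⟨c', m', hc'⟩ := b.mem_padicFrac i
        have hp : (p : ℚ) ≠ 0 := Nat.cast_ne_zero.mpr (Fact.out : p.Prime).ne_zero
        refine ⟨c * p ^ m' + c' * p ^ m, m + m', ?_⟩
        show a.val i + b.val i = _
        rw [hc, hc']
        push_cast
        rw [pow_add]
        field_simp
        try ring }

end WeightFun

/-- The set `I_0` attached to a pair `(a, I)`: all elements of the support of `a`
that strictly precede every element of `I` for the order `⪯`. -/
noncomputable def block0 {p n : ℕ} (a : WeightFun p n) (I : Finset (Fin n)) : Finset (Fin n) :=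
  a.supp.filter fun i => ∀ j ∈ I, WeightFun.key a i < WeightFun.key a j

/-- The set `I_l` attached to `(a, I)` and anchored at `j = i_l ∈ I`: all elements of the
support of `a` lying between `i_l` (inclusive) and the next element of `I` (exclusive)
for the order `⪯`. -/
noncomputable def blockOf {p n : ℕ} (a : WeightFun p n) (I : Finset (Fin n)) (j : Fin n) :
    Finset (Fin n) :=
  a.supp.filter fun i => WeightFun.key a j ≤ WeightFun.key a i ∧
    ∀ j' ∈ I, WeightFun.key a j < WeightFun.key a j' → WeightFun.key a i < WeightFun.key a j'

/-- The list of the elements `i_1 ≺ i_2 ≺ ⋯ ≺ i_m` of `I`, sorted for the order `⪯`. -/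
noncomputable def sortedList {p n : ℕ} (a : WeightFun p n) (I : Finset (Fin n)) : List (Fin n) :=
  (Finset.sort (α := ℤ ×ₗ Fin n) (I.image (WeightFun.key a)) (· ≤ ·)).map fun x => (ofLex x).2

/-- The monomial `X^b = ∏ i, X i ^ b i`. -/
noncomputable def monom {n : ℕ} (k : Type) [CommRing k] (b : Fin n → ℕ) :
    MvPolynomial (Fin n) k :=
  ∏ i, MvPolynomial.X i ^ b i

/-- The exponents (natural numbers) of the weight function `p ^ m • (a|_J)`. -/
noncomputable def scaleExp {p n : ℕ} (a : WeightFun p n) (m : ℤ) (J : Finset (Fin n)) :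
    Fin n → ℕ :=
  fun i => if i ∈ J then ⌊(p : ℚ) ^ m * a.val i⌋₊ else 0

/-- The partitions of a weight function `c` of a given size `sz`: the subsets of the
support of `c` of cardinality `sz`. -/
noncomputable def partsOf {p n : ℕ} (c : WeightFun p n) (sz : ℕ) : Finset (Finset (Fin n)) :=
  c.supp.powerset.filter fun L => L.card = sz

/-- The de Rham-Witt complex `WΩ_{R/k}` of a commutative `k`-algebra `R`, as a differential
graded `W(k)`-algebra with `WΩ⁰_{R/k} ≅ W(R)`, together with its Frobenius `F`,
Verschiebung `V`, and the Teichmüller map (through `ι : W(R) →+* WΩ_{R/k}`). -/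
structure DRW (p : ℕ) [Fact p.Prime] (k : Type) [CommRing k] (R : Type) [CommRing R]
    [Algebra k R] where
  /-- the underlying (graded) ring -/
  Ω : Type
  [ringΩ : Ring Ω]
  /-- the grading -/
  grade : ℕ → AddSubgroup Ω
  /-- the differential -/
  d : Ω →+ Ω
  /-- the Frobenius -/
  F : Ω →+* Ω
  /-- the Verschiebung -/
  V : Ω →+ Ω
  /-- the inclusion of `W(R)` as `WΩ⁰` -/
  ι : WittVector p R →+* Ω
  /-- every integer prime to `p` is invertible (`WΩ` is a `ℤ_(p)`-algebra) -/
  natUnit : ∀ m : ℕ, ¬ p ∣ m → IsUnit ((m : ℕ) : Ω)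
  F_teich : ∀ r : R, F (ι (WittVector.teichmuller p r)) = ι (WittVector.teichmuller p (r ^ p))
  V_mul_F : ∀ x y : Ω, V (x * F y) = V x * y
  d_F_pow : ∀ (m : ℕ) (x : Ω), d ((⇑F)^[m] x) = (p : Ω) ^ m * (⇑F)^[m] (d x)
  F_pow_d_teich : ∀ (m : ℕ) (P : R),
    (⇑F)^[m] (d (ι (WittVector.teichmuller p P))) =
      ι (WittVector.teichmuller p (P ^ (p ^ m - 1))) * d (ι (WittVector.teichmuller p P))
  F_ι : ∀ w, F (ι w) = ι (WittVector.frobenius w)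
  V_ι : ∀ w, V (ι w) = ι (WittVector.verschiebung w)
  leibniz : ∀ (i j : ℕ) (x y : Ω), x ∈ grade i → y ∈ grade j →
    d (x * y) = (-1 : ℤ) ^ i • (x * d y) + (-1 : ℤ) ^ ((i + 1) * j) • (y * d x)

attribute [instance] DRW.ringΩ

namespace DRW

variable {p n : ℕ} [Fact p.Prime] {k : Type} [CommRing k]

/-- The Teichmüller representative `[P] ∈ WΩ` of a polynomial `P`. -/
noncomputable def tm (D : DRW p k (MvPolynomial (Fin n) k)) (P : MvPolynomial (Fin n) k) :
    D.Ω :=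
  D.ι (WittVector.teichmuller p P)

/-- The element `g(a) = F^{u(a)+val_p(a)} (d (V^{u(a)} ([X^{p^{-val_p(a)} a}])))`. -/
noncomputable def g (D : DRW p k (MvPolynomial (Fin n) k)) (a : WeightFun p n) : D.Ω :=
  (⇑D.F)^[a.valp.toNat]
    (D.d ((⇑D.V)^[a.u] (D.tm (monom k (scaleExp a (-a.valp) Finset.univ)))))

/-- The element `h(a, I) = ∏_{i ∈ Supp(a) ∖ I} [X_i]^{a_i} ∏_{j ∈ I} g(a|_{j})`, for an
`ℕ`-valued weight function `a` (the product over `I` taken in the order `⪯`). -/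
noncomputable def h (D : DRW p k (MvPolynomial (Fin n) k)) (a : WeightFun p n)
    (I : Finset (Fin n)) : D.Ω :=
  D.tm (monom k fun i => if i ∈ a.supp \ I then ⌊a.val i⌋₊ else 0) *
    ((sortedList a I).map fun j => D.g (a.restrict {j})).prod

/-- The basic element `e(η, a, I)` of the de Rham-Witt complex. -/
noncomputable def e (D : DRW p k (MvPolynomial (Fin n) k)) (η : WittVector p k)
    (a : WeightFun p n) (I : Finset (Fin n)) : D.Ω :=
  if block0 a I = ∅ ∧ a.u ≠ 0 then
    match sortedList a I with
    | [] => 0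
    | j :: js =>
        D.d ((⇑D.V)^[a.u] (D.ι (WittVector.map (algebraMap k (MvPolynomial (Fin n) k)) η) *
            D.tm (monom k (scaleExp a (a.u : ℤ) (blockOf a I j))))) *
          (js.map fun j' => D.g (a.restrict (blockOf a I j'))).prod
  else
    (⇑D.V)^[a.u] (D.ι (WittVector.map (algebraMap k (MvPolynomial (Fin n) k)) η) *
        D.tm (monom k (scaleExp a (a.u : ℤ) (block0 a I)))) *
      ((sortedList a I).map fun j => D.g (a.restrict (blockOf a I j))).prod

end DRW

/-- The de Rham-Witt complex of a polynomial algebra `k[X_1, …, X_n]`, together with the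
coefficient functions `(a, I) ↦ η_{a,I}` of the structure theorem of Langer-Zink:
every element is the unique convergent sum `x = Σ_{(a,I)} e(η_{a,I}, a, I)`. -/
structure DRWPoly (p n : ℕ) [Fact p.Prime] (k : Type) [CommRing k] extends
    DRW p k (MvPolynomial (Fin n) k) where
  /-- The coefficient `η_{a,I}` of `x` on the basic element `e(η_{a,I}, a, I)`. -/
  coeff : Ω → WeightFun p n → Finset (Fin n) → WittVector p k
  coeff_add : ∀ (x y : Ω) (a : WeightFun p n) (I : Finset (Fin n)),
    coeff (x + y) a I = coeff x a I + coeff y a I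
  coeff_e_self : ∀ (η : WittVector p k) (a : WeightFun p n) (I : Finset (Fin n)),
    I ⊆ a.supp → coeff (toDRW.e η a I) a I = η
  coeff_e_ne : ∀ (η : WittVector p k) (a : WeightFun p n) (I : Finset (Fin n)), I ⊆ a.supp →
    ∀ (b : WeightFun p n) (J : Finset (Fin n)), ¬(b = a ∧ J = I) → coeff (toDRW.e η a I) b J = 0
  coeff_ext : ∀ x y : Ω,
    (∀ (a : WeightFun p n) (I : Finset (Fin n)), I ⊆ a.supp → coeff x a I = coeff y a I) → x = y

/-- The `V`-adic pseudovaluation on `W(k)`: the largest `m` such that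
`η ∈ V^m(W(k))` (and `+∞` for `η = 0`). -/
noncomputable def valV {p : ℕ} [Fact p.Prime] {k : Type} [CommRing k]
    (η : WittVector p k) : EReal :=
  sSup {x : EReal | ∃ m : ℕ, x = ((m : ℝ) : EReal) ∧
    η ∈ Set.range ((⇑(WittVector.verschiebung : WittVector p k →+ WittVector p k))^[m])}

/-- The number of factors of `e(η, a, I)` (ignoring `η`): `#I` if `I_0 = ∅`,
and `#I + 1` otherwise. -/
noncomputable def cIdx {p n : ℕ} (a : WeightFun p n) (I : Finset (Fin n)) : ℕ :=
  if block0 a I = ∅ then I.card else I.card + 1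

/-- `ζ_ε` as a function of a family of coefficients indexed by `𝒫`:
`inf_{(a,I) ∈ 𝒫} (2n val_V (η_{a,I}) + c_I u(a) - ε |a|)`. -/
noncomputable def zetaFam {p : ℕ} (n : ℕ) [Fact p.Prime] {k : Type} [CommRing k] (ε : ℝ)
    (c : WeightFun p n → Finset (Fin n) → WittVector p k) : EReal :=
  ⨅ q : {q : WeightFun p n × Finset (Fin n) // q.2 ⊆ q.1.supp},
    (((2 * n : ℕ) : ℝ) : EReal) * valV (c q.1.1 q.1.2) +
      (((cIdx q.1.1 q.1.2 * q.1.1.u : ℕ) : ℝ) : EReal) -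
      ((ε * (q.1.1.total : ℝ) : ℝ) : EReal)

/-- `γ_ε` of Davis-Langer-Zink, as a function of a family of coefficients indexed by `𝒫`:
`inf_{(a,I) ∈ 𝒫} (val_V (η_{a,I}) + u(a) - ε |a|)`. -/
noncomputable def gammaFam {p : ℕ} (n : ℕ) [Fact p.Prime] {k : Type} [CommRing k] (ε : ℝ)
    (c : WeightFun p n → Finset (Fin n) → WittVector p k) : EReal :=
  ⨅ q : {q : WeightFun p n × Finset (Fin n) // q.2 ⊆ q.1.supp},
    valV (c q.1.1 q.1.2) + (((q.1.1.u : ℕ) : ℝ) : EReal) -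
      ((ε * (q.1.1.total : ℝ) : ℝ) : EReal)

namespace DRWPoly

variable {p n : ℕ} [Fact p.Prime] {k : Type} [CommRing k]

/-- The function `ζ_ε` on the de Rham-Witt complex. -/
noncomputable def zeta (D : DRWPoly p n k) (ε : ℝ) (x : D.Ω) : EReal :=
  zetaFam n ε (D.coeff x)

/-- The function `γ_ε` of Davis-Langer-Zink on the de Rham-Witt complex. -/
noncomputable def gamma (D : DRWPoly p n k) (ε : ℝ) (x : D.Ω) : EReal :=
  gammaFam n ε (D.coeff x)

/-- `ζ_ε (x|_int)`: the value of `ζ_ε` on the integral part of `x`. -/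
noncomputable def zetaInt (D : DRWPoly p n k) (ε : ℝ) (x : D.Ω) : EReal :=
  zetaFam n ε fun a I => if a.u = 0 then D.coeff x a I else 0

/-- `ζ_ε (x|_frp)`: the value of `ζ_ε` on the pure fractional part of `x`. -/
noncomputable def zetaFrp (D : DRWPoly p n k) (ε : ℝ) (x : D.Ω) : EReal :=
  zetaFam n ε fun a I => if a.u ≠ 0 ∧ block0 a I ≠ ∅ then D.coeff x a I else 0

/-- `ζ_ε (x|_d(frp))`: the value of `ζ_ε` on the exact pure fractional part of `x`. -/
noncomputable def zetaDfrp (D : DRWPoly p n k) (ε : ℝ) (x : D.Ω) : EReal :=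
  zetaFam n ε fun a I => if a.u ≠ 0 ∧ block0 a I = ∅ then D.coeff x a I else 0

/-- `x` is integral: `η_{a,I} = 0` whenever `u(a) ≠ 0`. -/
def IsIntegral (D : DRWPoly p n k) (x : D.Ω) : Prop :=
  ∀ (a : WeightFun p n) (I : Finset (Fin n)), I ⊆ a.supp → a.u ≠ 0 → D.coeff x a I = 0

/-- `x` is integral of pure degree `j`: integral, and `η_{a,I} = 0` whenever `#I ≠ j`. -/
def IsIntegralDeg (D : DRWPoly p n k) (j : ℕ) (x : D.Ω) : Prop :=
  ∀ (a : WeightFun p n) (I : Finset (Fin n)), I ⊆ a.supp →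
    (a.u ≠ 0 ∨ I.card ≠ j) → D.coeff x a I = 0

/-- `x` is fractional: `η_{a,I} = 0` whenever `u(a) = 0`. -/
def IsFrac (D : DRWPoly p n k) (x : D.Ω) : Prop :=
  ∀ (a : WeightFun p n) (I : Finset (Fin n)), I ⊆ a.supp → a.u = 0 → D.coeff x a I = 0

/-- `x` is pure fractional: `η_{a,I} = 0` whenever `u(a) = 0` or `I_0 = ∅`. -/
def IsFrp (D : DRWPoly p n k) (x : D.Ω) : Prop :=
  ∀ (a : WeightFun p n) (I : Finset (Fin n)), I ⊆ a.supp →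
    (a.u = 0 ∨ block0 a I = ∅) → D.coeff x a I = 0

/-- `x` belongs to `d(WΩ^frp)`. -/
def IsDFrp (D : DRWPoly p n k) (x : D.Ω) : Prop :=
  ∃ y : D.Ω, D.IsFrp y ∧ x = D.d y

end DRWPoly

/-- A pseudovaluation on a ring, with values in `ℝ ∪ {±∞}`. -/
structure IsPseudovaluation {A : Type} [Ring A] (v : A → EReal) : Prop where
  map_zero : v 0 = ⊤
  map_one : v 1 = 0
  map_neg : ∀ x, v (-x) = v x
  min_le_add : ∀ x y, min (v x) (v y) ≤ v (x + y)
  add_le_mul : ∀ x y, v x ≠ ⊥ → v y ≠ ⊥ → v x + v y ≤ v (x * y)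


/-! Both `γ_ε` and `ζ_ε` are infima of expressions that are monotone in `val_V(η) ≥ 0` and
`u(a) ≥ 0`. The weights `2n` and `c_I` of `ζ` lie between `1` and `2n + 1` (with `c_I ≥ 1` as soon
as `u(a) ≠ 0`, since then `Supp(a) ≠ ∅`), so for `n ≥ 1` we get `γ_ε ≤ ζ_ε`, and in general
`ζ_ε ≤ (2n + 1) · γ_{ε/(2n+1)}`. For `n = 0` the weight `2n` and every `|a|` vanish, so `ζ_ε ≥ 0`. -/

lemma WeightFun.supp_nonempty_of_u_ne_zero {p n : ℕ} {a : WeightFun p n} (h : a.u ≠ 0) :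
    a.supp.Nonempty := by
  by_contra hs
  simp [WeightFun.u, WeightFun.valp, hs] at h

lemma block0_empty {p n : ℕ} (a : WeightFun p n) : block0 a ∅ = a.supp := by
  simp [block0]

lemma cIdx_pos_of_u_ne_zero {p n : ℕ} {a : WeightFun p n} (I : Finset (Fin n)) (h : a.u ≠ 0) :
    0 < cIdx a I := by
  unfold cIdx
  split_ifs with h0
  · rcases I.eq_empty_or_nonempty with rfl | hI
    · rw [block0_empty] at h0
      exact absurd h0 (WeightFun.supp_nonempty_of_u_ne_zero h).ne_empty
    · exact hI.card_pos
  · exact Nat.succ_pos _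

lemma u_le_cIdx_mul_u {p n : ℕ} (a : WeightFun p n) (I : Finset (Fin n)) :
    a.u ≤ cIdx a I * a.u := by
  rcases Nat.eq_zero_or_pos a.u with h | h
  · simp [h]
  · exact Nat.le_mul_of_pos_left _ (cIdx_pos_of_u_ne_zero I h.ne')

lemma cIdx_le {p n : ℕ} (a : WeightFun p n) (I : Finset (Fin n)) : cIdx a I ≤ n + 1 := by
  have hI : I.card ≤ n := by simpa using I.card_le_univ
  unfold cIdx
  split_ifs <;> omega

lemma valV_nonneg {p : ℕ} [Fact p.Prime] {k : Type} [CommRing k] (η : WittVector p k) :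
    0 ≤ valV η :=
  le_sSup ⟨0, by simp, η, rfl⟩

section Comparison

variable {p : ℕ} [Fact p.Prime] {k : Type} [CommRing k]

lemma zetaFam_zero_nonneg (ε : ℝ) (c : WeightFun p 0 → Finset (Fin 0) → WittVector p k) :
    0 ≤ zetaFam 0 ε c :=
  le_iInf fun q => by
    simp only [mul_zero, CharP.cast_eq_zero, EReal.coe_zero, zero_mul, Nat.cast_mul,
      EReal.coe_mul, EReal.coe_natCast, zero_add, WeightFun.total, Finset.univ_eq_empty,
      Finset.sum_empty, Rat.cast_zero, sub_zero]
    positivity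

lemma gammaFam_le_zetaFam {n : ℕ} (hn : 0 < n) (ε : ℝ)
    (c : WeightFun p n → Finset (Fin n) → WittVector p k) :
    gammaFam n ε c ≤ zetaFam n ε c := by
  refine iInf_mono fun q => EReal.sub_le_sub (add_le_add ?_ ?_) le_rfl
  · have h2n : (1 : EReal) ≤ (((2 * n : ℕ) : ℝ) : EReal) := by
      exact_mod_cast (by omega : 1 ≤ 2 * n)
    simpa using mul_le_mul_of_nonneg_right h2n (valV_nonneg (c q.1.1 q.1.2))
  · exact_mod_cast u_le_cIdx_mul_u q.1.1 q.1.2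

lemma zetaFam_le_mul_gammaFam (n : ℕ) (ε : ℝ)
    (c : WeightFun p n → Finset (Fin n) → WittVector p k) :
    zetaFam n ε c ≤ ((2 * n + 1 : ℝ) : EReal) * gammaFam n (ε / (2 * n + 1)) c := by
  have hK : (0 : ℝ) < 2 * n + 1 := by positivity
  have hK₀ : (0 : EReal) ≤ ((2 * n + 1 : ℝ) : EReal) := EReal.coe_nonneg.2 hK.le
  rw [← EReal.div_le_iff_le_mul (EReal.coe_pos.2 hK) (EReal.coe_ne_top _)]
  refine le_iInf fun q => ?_
  rw [EReal.div_le_iff_le_mul (EReal.coe_pos.2 hK) (EReal.coe_ne_top _)]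
  refine (iInf_le _ q).trans ?_
  obtain ⟨⟨a, I⟩, -⟩ := q
  have hε : (2 * n + 1 : ℝ) * (ε / (2 * n + 1) * a.total) = ε * a.total := by field_simp
  rw [EReal.mul_sub_of_nonneg_of_ne_top hK₀ (EReal.coe_ne_top _),
    EReal.left_distrib_of_nonneg_of_ne_top hK₀ (EReal.coe_ne_top _),
    ← EReal.coe_mul, ← EReal.coe_mul, hε]
  refine EReal.sub_le_sub (add_le_add ?_ ?_) le_rfl
  · have h2n : (((2 * n : ℕ) : ℝ) : EReal) ≤ ((2 * n + 1 : ℝ) : EReal) := by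
      exact_mod_cast (by linarith : (2 * n : ℝ) ≤ 2 * n + 1)
    exact mul_le_mul_of_nonneg_right h2n (valV_nonneg _)
  · have hc : (cIdx a I : ℝ) ≤ 2 * n + 1 := by
      exact_mod_cast (by have := cIdx_le a I; omega : cIdx a I ≤ 2 * n + 1)
    have : (cIdx a I * a.u : ℝ) ≤ (2 * n + 1) * a.u := by gcongr
    exact_mod_cast this

end Comparison

theorem exists_gamma_ne_bot_iff_exists_zeta_ne_bot_general (p n : ℕ) [Fact p.Prime] (k : Type)
    [CommRing k] (D : DRWPoly p n k) (x : D.Ω) :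
    (∃ ε : ℝ, 0 < ε ∧ D.gamma ε x ≠ ⊥) ↔ ∃ ε : ℝ, 0 < ε ∧ D.zeta ε x ≠ ⊥ := by
  constructor
  · rintro ⟨ε, hε, hγ⟩
    rcases n.eq_zero_or_pos with rfl | hn
    · exact ⟨1, one_pos, ne_bot_of_le_ne_bot EReal.zero_ne_bot (zetaFam_zero_nonneg _ _)⟩
    · exact ⟨ε, hε, ne_bot_of_le_ne_bot hγ (gammaFam_le_zetaFam hn ε _)⟩
  · rintro ⟨ε, hε, hζ⟩
    refine ⟨ε / (2 * n + 1), by positivity, fun hγ => hζ ?_⟩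
    have hζγ := zetaFam_le_mul_gammaFam n ε (D.coeff x)
    rwa [← DRWPoly.gamma, hγ, EReal.coe_mul_bot_of_pos (by positivity), le_bot_iff] at hζγ

/-- For every `x` in the de Rham-Witt complex, there is `ε > 0` with `γ_ε(x) ≠ -∞` if and
only if there is `ε' > 0` with `ζ_{ε'}(x) ≠ -∞`: the functions `ζ` define the same
overconvergent de Rham-Witt complex as the functions `γ` of Davis-Langer-Zink. -/
theorem exists_gamma_ne_bot_iff_exists_zeta_ne_bot (p n : ℕ) [Fact p.Prime] (k : Type)
    [CommRing k] [CharP k p] (D : DRWPoly p n k) (x : D.Ω) :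
    (∃ ε : ℝ, 0 < ε ∧ D.gamma ε x ≠ ⊥) ↔ ∃ ε : ℝ, 0 < ε ∧ D.zeta ε x ≠ ⊥ :=
  exists_gamma_ne_bot_iff_exists_zeta_ne_bot_general p n k D x
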